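/- Let T be a spherically homogeneous rooted tree and let G ≤ Aut(T) be a weakly branch group. Then for every vertex v of T and every k ∈ ℕ, the subgroup rist_G(v)^(k) is non-trivial; in other words, rist_G(v) is not solvable. -/

import Mathlib

open Equiv

namespace PaperDefs


/-! ### Spherically homogeneous rooted trees -/

variable (A : ℕ → Type)

/-- Vertices of the spherically homogeneous rooted tree determined by the
sequence of alphabets `A`: words `a₁a₂⋯aₙ` with `aᵢ ∈ A i`. -/
def Vertex : Type := Σ n : ℕ, ∀ i : Fin n, A i

/-- The prefix relation on vertices. -/
def IsPref (v w : Vertex A) : Prop :=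
  ∃ h : v.1 ≤ w.1, ∀ i : Fin v.1, v.2 i = w.2 (Fin.castLE h i)

/-- The automorphism group of the tree: permutations of the vertex set that
preserve the prefix relation. -/
def treeAut : Subgroup (Perm (Vertex A)) where
  carrier := {g | ∀ v w, IsPref A v w ↔ IsPref A (g v) (g w)}
  one_mem' := by intro v w; simp
  mul_mem' := by
    intro a b ha hb v w
    simpa [Equiv.Perm.mul_apply] using (hb v w).trans (ha (b v) (b w))
  inv_mem' := by
    intro a ha v w
    simpa using (ha (a⁻¹ v) (a⁻¹ w)).symm

/-- The stabiliser of the vertex `v` in `G`. -/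
def stG (G : Subgroup (Perm (Vertex A))) (v : Vertex A) : Subgroup (Perm (Vertex A)) :=
  G ⊓ MulAction.stabilizer (Perm (Vertex A)) v

/-- The rigid stabiliser of the vertex `v` in `G`: elements of `G` fixing every
vertex that does not have `v` as a prefix. -/
def rist (G : Subgroup (Perm (Vertex A))) (v : Vertex A) : Subgroup (Perm (Vertex A)) where
  carrier := {g | g ∈ G ∧ ∀ w, ¬ IsPref A v w → g w = w}
  one_mem' := ⟨G.one_mem, fun w _ => by simp⟩
  mul_mem' := by
    rintro a b ⟨haG, ha⟩ ⟨hbG, hb⟩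
    refine ⟨G.mul_mem haG hbG, fun w hw => ?_⟩
    simp [Equiv.Perm.mul_apply, hb w hw, ha w hw]
  inv_mem' := by
    rintro a ⟨haG, ha⟩
    refine ⟨G.inv_mem haG, fun w hw => ?_⟩
    conv_lhs => rw [← ha w hw]
    simp

/-- The rigid stabiliser of the `n`-th level: the subgroup generated by the rigid
stabilisers of the vertices of level `n`. -/
def ristLevel (G : Subgroup (Perm (Vertex A))) (n : ℕ) : Subgroup (Perm (Vertex A)) :=
  ⨆ (v : Vertex A) (_ : v.1 = n), rist A G v

/-- `G` acts spherically transitively: transitively on every level. -/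
def SphTrans (G : Subgroup (Perm (Vertex A))) : Prop :=
  ∀ v w : Vertex A, v.1 = w.1 → ∃ g ∈ G, g v = w

/-- `G ≤ Aut T` is a weakly branch group. -/
def IsWeaklyBranch (G : Subgroup (Perm (Vertex A))) : Prop :=
  G ≤ treeAut A ∧ SphTrans A G ∧ ∀ v : Vertex A, rist A G v ≠ ⊥

/-- `G ≤ Aut T` is a branch group. -/
def IsBranch (G : Subgroup (Perm (Vertex A))) : Prop :=
  IsWeaklyBranch A G ∧ ∀ n : ℕ, (ristLevel A G n).relIndex G ≠ 0

/-! ### Boundary of the tree -/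

/-- The boundary of the tree: infinite words. -/
def Boundary : Type := ∀ i : ℕ, A i

/-- The length-`n` prefix of a boundary point. -/
def bdryPrefix (ξ : Boundary A) (n : ℕ) : Vertex A := ⟨n, fun i => ξ i⟩

/-- The support of a subgroup `H` on the boundary: boundary points moved by some
element of `H` (a boundary point is moved by a tree automorphism iff one of its
finite prefixes is moved). -/
def supp (H : Subgroup (Perm (Vertex A))) : Set (Boundary A) :=
  {ξ | ∃ h ∈ H, ∃ n : ℕ, h (bdryPrefix A ξ n) ≠ bdryPrefix A ξ n}

/-! ### Sections / projections -/

/-- The shifted alphabet sequence, describing the subtree rooted at a vertex of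
level `n`. -/
def shift (n : ℕ) : ℕ → Type := fun i => A (i + n)

/-- Concatenation of a vertex `v` of level `n` with a vertex of the subtree `T_v`
(viewed in the shifted tree). -/
def concat (n : ℕ) (v : Vertex A) (hv : v.1 = n) (w : Vertex (shift A n)) : Vertex A :=
  ⟨n + w.1, fun i =>
    if h : (i : ℕ) < n then v.2 ⟨(i : ℕ), by omega⟩
    else cast (congrArg A (by have := i.isLt; omega : (i : ℕ) - n + n = (i : ℕ)))
      (w.2 ⟨(i : ℕ) - n, by have := i.isLt; omega⟩)⟩

/-- `projStab A G n v hv` is `G_v = φ_v(St_G(v))`, the image under the projection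
`φ_v` of the stabiliser of `v` in `G`, realised as a subgroup of the automorphisms
of the subtree `T_v` (identified with the tree on the shifted alphabet sequence):
it consists of those `σ` for which some `g ∈ G` stabilises `v` and satisfies
`g (v·w) = v·(σ w)` for every vertex `w` of the subtree. -/
def projStab (G : Subgroup (Perm (Vertex A))) (n : ℕ) (v : Vertex A) (hv : v.1 = n) :
    Subgroup (Perm (Vertex (shift A n))) where
  carrier := {σ | ∃ g ∈ G, g v = v ∧ ∀ w, g (concat A n v hv w) = concat A n v hv (σ w)}
  one_mem' := ⟨1, G.one_mem, by simp, fun w => by simp⟩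
  mul_mem' := by
    rintro σ τ ⟨g, hgG, hgv, hg⟩ ⟨g', hg'G, hg'v, hg'⟩
    refine ⟨g * g', G.mul_mem hgG hg'G, by simp [Equiv.Perm.mul_apply, hg'v, hgv], fun w => ?_⟩
    simp [Equiv.Perm.mul_apply, hg' w, hg (τ w)]
  inv_mem' := by
    rintro σ ⟨g, hgG, hgv, hg⟩
    refine ⟨g⁻¹, G.inv_mem hgG, by simpa using (congrArg (⇑g⁻¹) hgv).symm, fun w => ?_⟩
    have h1 : g (concat A n v hv (σ⁻¹ w)) = concat A n v hv w := by
      rw [hg (σ⁻¹ w)]; simp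
    calc g⁻¹ (concat A n v hv w) = g⁻¹ (g (concat A n v hv (σ⁻¹ w))) := by rw [h1]
      _ = concat A n v hv (σ⁻¹ w) := by simp

/-! ### Group-theoretic notions -/

/-- `H` is a normal subgroup of `K` (both being subgroups of an ambient group). -/
def NormalIn {P : Type*} [Group P] (H K : Subgroup P) : Prop :=
  H ≤ K ∧ ∀ k ∈ K, ∀ h ∈ H, k * h * k⁻¹ ∈ H

/-- `H` is `k`-subnormal in `G`: there is a chain `H = c k ⊴ ⋯ ⊴ c 0 = G`. -/
def SubnormalIn {P : Type*} [Group P] (H G : Subgroup P) (k : ℕ) : Prop :=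
  ∃ c : ℕ → Subgroup P, c 0 = G ∧ c k = H ∧ ∀ i < k, NormalIn (c (i + 1)) (c i)

/-- The iterated derived subgroup `H⁽ᵏ⁾` of a subgroup `H` of an ambient group. -/
def derivedIter {P : Type*} [Group P] (H : Subgroup P) : ℕ → Subgroup P
  | 0 => H
  | k + 1 => ⁅derivedIter H k, derivedIter H k⁆

/-- The class `𝓜𝓕` of groups all of whose maximal subgroups have finite index. -/
def MF (Γ : Type*) [Group Γ] : Prop :=
  ∀ M : Subgroup Γ, IsCoatom M → M.index ≠ 0

/-- Every proper quotient of `Γ` belongs to `𝓜𝓕`. -/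
def QuotientsMF (Γ : Type*) [Group Γ] : Prop :=
  ∀ (N : Subgroup Γ) [N.Normal], N ≠ ⊥ → MF (Γ ⧸ N)

/-- `H` is a prodense subgroup of `Γ`: `HN = Γ` for every nontrivial normal `N ⊴ Γ`. -/
def Prodense {Γ : Type*} [Group Γ] (H : Subgroup Γ) : Prop :=
  ∀ N : Subgroup Γ, N.Normal → N ≠ ⊥ → H ⊔ N = ⊤

/-- `H` is a prodense subgroup of `G`, both being subgroups of an ambient group:
`H ≤ G` and `HN = G` for every nontrivial subgroup `N ≤ G` normal in `G`. -/
def ProdenseIn {P : Type*} [Group P] (H G : Subgroup P) : Prop :=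
  H ≤ G ∧ ∀ N : Subgroup P, N ≤ G → NormalIn N G → N ≠ ⊥ → H ⊔ N = G

/-- `M` is a maximal subgroup of `G` (both subgroups of an ambient group). -/
def MaximalIn {P : Type*} [Group P] (M G : Subgroup P) : Prop :=
  M < G ∧ ∀ K : Subgroup P, M < K → K ≤ G → K = G

/-! A nontrivial `g ∈ rist_G(v)⁽ᵏ⁾` moves some vertex `u` below `v`, and `rist_G(u)⁽ᵏ⁾ ≤ rist_G(v)⁽ᵏ⁾`
contains some `h ≠ 1`. Since `g` is a tree automorphism, `g u ≠ u` lies on the level of `u`, so `g` maps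
the subtree at `u`, which carries the support of `h`, off itself; hence `g h g⁻¹` and `h` have disjoint
supports and the commutator `⁅g, h⁆ ∈ rist_G(v)⁽ᵏ⁺¹⁾` is nontrivial. -/

lemma derivedIter_mono {P : Type*} [Group P] {H K : Subgroup P} (h : H ≤ K) (k : ℕ) :
    derivedIter H k ≤ derivedIter K k := by
  induction k with
  | zero => exact h
  | succ k ih => exact Subgroup.commutator_mono ih ih

lemma derivedIter_le {P : Type*} [Group P] (H : Subgroup P) (k : ℕ) : derivedIter H k ≤ H := by
  induction k with
  | zero => exact le_rfl
  | succ k ih => exact (Subgroup.commutator_le_self _).trans ih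

section Tree

variable {A}

open scoped commutatorElement

lemma IsPref.trans {u v w : Vertex A} (huv : IsPref A u v) (hvw : IsPref A v w) :
    IsPref A u w :=
  ⟨huv.1.trans hvw.1, fun i => (huv.2 i).trans (hvw.2 (Fin.castLE huv.1 i))⟩

lemma IsPref.eq_of_isPref {u u' w : Vertex A} (hu : IsPref A u w) (hu' : IsPref A u' w)
    (hlen : u.1 = u'.1) : u = u' := by
  obtain ⟨n, f⟩ := u
  obtain ⟨m, f'⟩ := u'
  obtain rfl : n = m := hlen
  congr 1
  funext i
  exact (hu.2 i).trans (hu'.2 i).symm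

def truncate (v : Vertex A) (m : ℕ) (hm : m ≤ v.1) : Vertex A :=
  ⟨m, fun i => v.2 (Fin.castLE hm i)⟩

lemma isPref_truncate (v : Vertex A) (m : ℕ) (hm : m ≤ v.1) : IsPref A (truncate v m hm) v :=
  ⟨hm, fun _ => rfl⟩

lemma IsPref.eq_truncate {u v : Vertex A} (h : IsPref A u v) : u = truncate v u.1 h.1 :=
  h.eq_of_isPref (isPref_truncate v u.1 h.1) rfl

def prefixEquivFin (v : Vertex A) : {u : Vertex A // IsPref A u v} ≃ Fin (v.1 + 1) where
  toFun u := ⟨u.1.1, Nat.lt_succ_of_le u.2.1⟩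
  invFun m := ⟨truncate v m (Nat.lt_succ_iff.mp m.2), isPref_truncate v m _⟩
  left_inv u := Subtype.ext u.2.eq_truncate.symm
  right_inv _ := rfl

/-- `g` is a bijection between the prefixes of `v` and those of `g v`, and a vertex of level `n`
has `n + 1` prefixes. -/
lemma level_apply_of_mem_treeAut {g : Perm (Vertex A)} (hg : g ∈ treeAut A) (v : Vertex A) :
    (g v).1 = v.1 := by
  have e : {u // IsPref A u v} ≃ {u // IsPref A u (g v)} := g.subtypeEquiv fun u => hg u v
  simpa using (Nat.card_congr ((prefixEquivFin v).symm.trans (e.trans (prefixEquivFin (g v))))).symm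

lemma isPref_of_mem_rist {G : Subgroup (Perm (Vertex A))} {v w : Vertex A} {h : Perm (Vertex A)}
    (hh : h ∈ rist A G v) (hw : h w ≠ w) : IsPref A v w := by
  by_contra hvw
  exact hw (hh.2 w hvw)

lemma rist_anti {G : Subgroup (Perm (Vertex A))} {v u : Vertex A} (hvu : IsPref A v u) :
    rist A G u ≤ rist A G v :=
  fun _ hg => ⟨hg.1, fun w hw => hg.2 w fun huw => hw (hvu.trans huw)⟩

/-- For `w` moved by `h`, `⁅g, h⁆` moves `g w`, which lies outside the subtree at `u`. -/
lemma commutatorElement_ne_one_of_mem_rist {G : Subgroup (Perm (Vertex A))} {g h : Perm (Vertex A)}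
    {u : Vertex A} (hg : g ∈ treeAut A) (hgu : g u ≠ u) (hh : h ∈ rist A G u) (hh1 : h ≠ 1) :
    ⁅g, h⁆ ≠ 1 := by
  obtain ⟨w, hw⟩ : ∃ w, h w ≠ w := DFunLike.ne_iff.mp hh1
  have hgw : ¬ IsPref A u (g w) := fun hu =>
    hgu (((hg u w).mp (isPref_of_mem_rist hh hw)).eq_of_isPref hu (level_apply_of_mem_treeAut hg u))
  have hinv : h⁻¹ (g w) = g w := by
    rw [Perm.inv_eq_iff_eq, hh.2 _ hgw]
  intro hc
  have := congrArg (· (g w)) hc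
  simp only [commutatorElement_def, Perm.mul_apply, hinv, Perm.coe_inv, symm_apply_apply,
    Perm.one_apply, EmbeddingLike.apply_eq_iff_eq] at this
  exact hw this

end Tree

theorem derivedIter_rist_ne_bot_general
    (A : ℕ → Type)
    (G : Subgroup (Perm (Vertex A))) (hG : IsWeaklyBranch A G)
    (v : Vertex A) (k : ℕ) :
    derivedIter (rist A G v) k ≠ ⊥ := by
  induction k generalizing v with
  | zero => exact hG.2.2 v
  | succ k ih =>
    obtain ⟨g, hgD, hg1⟩ := (Subgroup.bot_or_exists_ne_one _).resolve_left (ih v)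
    have hgr : g ∈ rist A G v := derivedIter_le _ k hgD
    obtain ⟨u, hgu⟩ : ∃ u, g u ≠ u := DFunLike.ne_iff.mp hg1
    obtain ⟨h, hhD, hh1⟩ := (Subgroup.bot_or_exists_ne_one _).resolve_left (ih u)
    have hhDv : h ∈ derivedIter (rist A G v) k :=
      derivedIter_mono (rist_anti (isPref_of_mem_rist hgr hgu)) k hhD
    exact ne_of_mem_of_not_mem' (Subgroup.commutator_mem_commutator hgD hhDv)
      (commutatorElement_ne_one_of_mem_rist (hG.1 hgr.1) hgu (derivedIter_le _ k hhD) hh1)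

/-- In a weakly branch group, every rigid vertex stabiliser is
non-solvable: all its iterated derived subgroups are non-trivial. -/
theorem derivedIter_rist_ne_bot
    (A : ℕ → Type) [∀ i, Fintype (A i)] (hcard : ∀ i, 2 ≤ Fintype.card (A i))
    (G : Subgroup (Perm (Vertex A))) (hG : IsWeaklyBranch A G)
    (v : Vertex A) (k : ℕ) :
    derivedIter (rist A G v) k ≠ ⊥ :=
  derivedIter_rist_ne_bot_general A G hG v k

end PaperDefs
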